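/- Let {k₁, k₂} = {(1,0), (0,3)} in the Krein space (ℝ², [.,.]) with [(x₁,x₂),(y₁,y₂)] = x₁y₁ − x₂y₂, and let U(x₁,x₂) = (−x₁, x₂). Then {k₁, k₂} and {Uk₁, Uk₂} are weaving frames, even though ‖I − U‖_J² = 4 > α/β for the frame bounds α = 1, β = 9. Hence the sufficient condition ‖I − U‖_J² < α/β for wovenness is not necessary. -/

import Mathlib

/-! Each `kᵢ` has a vanishing coordinate, so `U` only changes the sign of the coefficients
`[x, kᵢ]`; hence every weaving has the same frame sum `x₁² + 9x₂²` as `{kᵢ}` itself. On the other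
hand `I − U` is twice the projection onto the first axis, of norm `2`. -/

/-- Vectors of the Krein space `(ℝ², [.,.])` (Euclidean `J`-norm). -/
noncomputable def vR2 (a b : ℝ) : EuclideanSpace ℝ (Fin 2) :=
  (WithLp.equiv 2 (Fin 2 → ℝ)).symm ![a, b]

/-- The indefinite inner product `[(x₁,x₂),(y₁,y₂)] = x₁y₁ − x₂y₂` on `ℝ²`. -/
noncomputable def kreinR2 (x y : EuclideanSpace ℝ (Fin 2)) : ℝ :=
  x 0 * y 0 - x 1 * y 1

/-- The frame `{k₁, k₂} = {(1,0), (0,3)}`. -/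
noncomputable def ksR2' : Fin 2 → EuclideanSpace ℝ (Fin 2) := ![vR2 1 0, vR2 0 3]

/-- `B` may be indefinite (a Krein product) while `‖·‖` is the `J`-norm. -/
def HasFrameBounds {ι E : Type*} [Fintype ι] [Norm E] (B : E → E → ℝ) (k : ι → E) (α β : ℝ) :
    Prop :=
  ∀ x, α * ‖x‖ ^ 2 ≤ ∑ i, B x (k i) ^ 2 ∧ ∑ i, B x (k i) ^ 2 ≤ β * ‖x‖ ^ 2

theorem HasFrameBounds.weave {ι E : Type*} [Fintype ι] [DecidableEq ι] [Norm E]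
    {B : E → E → ℝ} {k k' : ι → E} {α β : ℝ} (hk : HasFrameBounds B k α β)
    (hk' : ∀ x i, B x (k' i) ^ 2 = B x (k i) ^ 2) (σ : Finset ι) (x : E) :
    α * ‖x‖ ^ 2 ≤ (∑ i ∈ σ, B x (k i) ^ 2) + ∑ i ∈ σᶜ, B x (k' i) ^ 2 ∧
      (∑ i ∈ σ, B x (k i) ^ 2) + ∑ i ∈ σᶜ, B x (k' i) ^ 2 ≤ β * ‖x‖ ^ 2 := by
  simp only [hk' x, Finset.sum_add_sum_compl]
  exact hk x

@[simp] lemma vR2_apply_zero (a b : ℝ) : vR2 a b 0 = a := rfl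

@[simp] lemma vR2_apply_one (a b : ℝ) : vR2 a b 1 = b := rfl

lemma norm_sq_eq_R2 (x : EuclideanSpace ℝ (Fin 2)) : ‖x‖ ^ 2 = x 0 ^ 2 + x 1 ^ 2 := by
  simp [EuclideanSpace.real_norm_sq_eq, Fin.sum_univ_two]

lemma norm_vR2_zero (a : ℝ) : ‖vR2 a 0‖ = |a| := by
  rw [← sq_eq_sq₀ (norm_nonneg _) (abs_nonneg a), norm_sq_eq_R2, sq_abs]
  simp

lemma sum_kreinR2_ksR2'_sq (x : EuclideanSpace ℝ (Fin 2)) :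
    ∑ i, kreinR2 x (ksR2' i) ^ 2 = x 0 ^ 2 + 9 * x 1 ^ 2 := by
  norm_num [Fin.sum_univ_two, kreinR2, ksR2', mul_pow, mul_comm]

theorem hasFrameBounds_ksR2' : HasFrameBounds kreinR2 ksR2' 1 9 := by
  intro x
  rw [sum_kreinR2_ksR2'_sq, norm_sq_eq_R2]
  constructor <;> nlinarith [sq_nonneg (x 0), sq_nonneg (x 1)]

section Flip

variable {U : EuclideanSpace ℝ (Fin 2) →L[ℝ] EuclideanSpace ℝ (Fin 2)}

lemma kreinR2_flip_ksR2'_sq (hU : ∀ x, U x = vR2 (-x 0) (x 1)) (x : EuclideanSpace ℝ (Fin 2))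
    (i : Fin 2) : kreinR2 x (U (ksR2' i)) ^ 2 = kreinR2 x (ksR2' i) ^ 2 := by
  fin_cases i <;> simp [hU, kreinR2, ksR2']

lemma one_sub_flip_apply (hU : ∀ x, U x = vR2 (-x 0) (x 1)) (x : EuclideanSpace ℝ (Fin 2)) :
    (1 - U) x = vR2 (2 * x 0) 0 := by
  ext i
  fin_cases i <;> simp [hU, two_mul]

lemma norm_one_sub_flip (hU : ∀ x, U x = vR2 (-x 0) (x 1)) : ‖1 - U‖ = 2 := by
  refine le_antisymm ((1 - U).opNorm_le_bound zero_le_two fun x => ?_) ?_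
  · rw [one_sub_flip_apply hU, norm_vR2_zero, abs_mul, abs_two]
    gcongr
    exact PiLp.norm_apply_le x 0
  · simpa [one_sub_flip_apply hU, norm_vR2_zero] using (1 - U).le_opNorm (vR2 1 0)

end Flip

/-- For `{k₁,k₂} = {(1,0),(0,3)}` in the Krein space `(ℝ², [.,.])`
with `[(x₁,x₂),(y₁,y₂)] = x₁y₁ − x₂y₂`, and `U(x₁,x₂) = (−x₁, x₂)`: `{k₁,k₂}` and
`{Uk₁,Uk₂}` are weaving frames, even though `‖I − U‖_J² = 4 > α/β = 1/9` for the
frame bounds `α = 1`, `β = 9`. Hence the sufficient condition `‖I − U‖_J² < α/β`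
for wovenness is not necessary. -/
theorem weaving_counterexample_R2_U
    (U : EuclideanSpace ℝ (Fin 2) →L[ℝ] EuclideanSpace ℝ (Fin 2))
    (hU : ∀ x : EuclideanSpace ℝ (Fin 2), U x = vR2 (-x 0) (x 1)) :
    (∃ α β : ℝ, 0 < α ∧ α ≤ β ∧
      ∀ (σ : Finset (Fin 2)) (x : EuclideanSpace ℝ (Fin 2)),
        α * ‖x‖ ^ 2 ≤
          (∑ i ∈ σ, kreinR2 x (ksR2' i) ^ 2) +
            ∑ i ∈ σᶜ, kreinR2 x (U (ksR2' i)) ^ 2 ∧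
        (∑ i ∈ σ, kreinR2 x (ksR2' i) ^ 2) +
            ∑ i ∈ σᶜ, kreinR2 x (U (ksR2' i)) ^ 2 ≤ β * ‖x‖ ^ 2) ∧
    ‖(1 : EuclideanSpace ℝ (Fin 2) →L[ℝ] EuclideanSpace ℝ (Fin 2)) - U‖ ^ 2 = 4 ∧
    ¬ ‖(1 : EuclideanSpace ℝ (Fin 2) →L[ℝ] EuclideanSpace ℝ (Fin 2)) - U‖ ^ 2 <
        (1 : ℝ) / 9 := by
  have hwoven := hasFrameBounds_ksR2'.weave (kreinR2_flip_ksR2'_sq hU)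
  rw [norm_one_sub_flip hU]
  exact ⟨⟨1, 9, one_pos, by norm_num, hwoven⟩, by norm_num, by norm_num⟩
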